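/- arXiv:2206.01446 — 2 statements merged into one kernel-verified Lean document; each statement's English description precedes it below -/
import Mathlib

section
/- Let α₁, β₁, α₂, β₂ > 0, a ≥ 1, b ≥ 1, −1 ≤ ρ ≤ 1, and for x, y > 0 set A = (x/β₁)^{α₁}, B = (y/β₂)^{α₂}, S = A + B, and D = exp(−(a−1)S)·((a+b)e^{−A} − a)·((a+b)e^{−B} − a). Then the GFGM bivariate Weibull CDF F_{XY}(x,y) = F_X(x)F_Y(y) + ρ·F_X(x)^b·F_Y(y)^b·(1−F_X(x))^a·(1−F_Y(y))^a, where F_X(x) = 1 − e^{−A} and F_Y(y) = 1 − e^{−B}, has second mixed partial derivative ∂²F_{XY}/∂x∂y equal to (α₁α₂/(β₁β₂))·A^{1−1/α₁}·B^{1−1/α₂}·e^{−S}·[1 + ρ(1−e^{−A})^{b−1}(1−e^{−B})^{b−1}·D] at every (x,y) with x > 0, y > 0. -/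
/-! The GFGM copula is `C(u, v) = u v + ρ φ(u) φ(v)` with `φ(u) = u^b (1 - u)^a`, so
`∂²C/∂u∂v = 1 + ρ φ'(u) φ'(v)`, and by the chain rule the mixed partial of `C(F_X(x), F_Y(y))`
is `f_X(x) f_Y(y) (1 + ρ φ'(F_X(x)) φ'(F_Y(y)))` with the Weibull densities `f_X, f_Y`.
For `u = 1 - e^{-A}` one has `φ'(u) = u^{b-1} e^{-(a-1)A} ((a+b) e^{-A} - a)`. -/

open Real

noncomputable section

/-- Agrees with the Weibull CDF for `x > 0` only. -/
def weibullCDF (α β x : ℝ) : ℝ := 1 - exp (-((x / β) ^ α))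

def gfgmCopula (a b ρ u v : ℝ) : ℝ := u * v + ρ * u ^ b * v ^ b * (1 - u) ^ a * (1 - v) ^ a

def gfgmPerturbation (a b u : ℝ) : ℝ := u ^ b * (1 - u) ^ a

def gfgmPerturbationDeriv (a b u : ℝ) : ℝ :=
  b * u ^ (b - 1) * (1 - u) ^ a - a * u ^ b * (1 - u) ^ (a - 1)

end

lemma rpow_rpow_one_sub_inv {t α : ℝ} (ht : 0 ≤ t) (hα : α ≠ 0) :
    (t ^ α) ^ (1 - 1 / α) = t ^ (α - 1) := by
  rw [← rpow_mul ht]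
  congr 1
  field_simp

lemma hasDerivAt_weibullCDF {α β x : ℝ} (hα : 0 < α) (hβ : 0 < β) (hx : 0 < x) :
    HasDerivAt (weibullCDF α β)
      (α / β * ((x / β) ^ α) ^ (1 - 1 / α) * exp (-((x / β) ^ α))) x := by
  have hxβ : 0 < x / β := div_pos hx hβ
  have hpow := ((hasDerivAt_id x).div_const β).rpow_const (p := α) (Or.inl hxβ.ne')
  refine (hpow.neg.exp.const_sub 1).congr_deriv ?_
  rw [rpow_rpow_one_sub_inv hxβ.le hα.ne']
  simp only [Pi.neg_apply, id]
  ring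

lemma gfgmCopula_eq_mul_add_perturbation (a b ρ u v : ℝ) :
    gfgmCopula a b ρ u v = u * v + ρ * gfgmPerturbation a b u * gfgmPerturbation a b v := by
  unfold gfgmCopula gfgmPerturbation
  ring

lemma hasDerivAt_gfgmPerturbation {a b : ℝ} (ha : 1 ≤ a) (hb : 1 ≤ b) (u : ℝ) :
    HasDerivAt (gfgmPerturbation a b) (gfgmPerturbationDeriv a b u) u := by
  have hub := (hasDerivAt_id u).rpow_const (p := b) (Or.inr hb)
  have hua := ((hasDerivAt_id u).const_sub 1).rpow_const (p := a) (Or.inr ha)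
  refine (hub.mul hua).congr_deriv ?_
  simp only [gfgmPerturbationDeriv, id]
  ring

lemma hasDerivAt_gfgmCopula_left {a b : ℝ} (ha : 1 ≤ a) (hb : 1 ≤ b) (ρ u v : ℝ) :
    HasDerivAt (fun u' => gfgmCopula a b ρ u' v)
      (v + ρ * gfgmPerturbationDeriv a b u * gfgmPerturbation a b v) u := by
  simp only [gfgmCopula_eq_mul_add_perturbation]
  refine (((hasDerivAt_id u).mul_const v).add
    (((hasDerivAt_gfgmPerturbation ha hb u).const_mul ρ).mul_const
      (gfgmPerturbation a b v))).congr_deriv ?_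
  ring

theorem deriv_deriv_gfgmCopula_comp {a b : ℝ} (ha : 1 ≤ a) (hb : 1 ≤ b) (ρ : ℝ)
    {F G : ℝ → ℝ} {F' G' x y : ℝ} (hF : HasDerivAt F F' x) (hG : HasDerivAt G G' y) :
    deriv (fun y' => deriv (fun x' => gfgmCopula a b ρ (F x') (G y')) x) y =
      F' * G' * (1 + ρ * gfgmPerturbationDeriv a b (F x) * gfgmPerturbationDeriv a b (G y)) := by
  have hinner : ∀ y', deriv (fun x' => gfgmCopula a b ρ (F x') (G y')) x =
      F' * (G y' + ρ * gfgmPerturbationDeriv a b (F x) * gfgmPerturbation a b (G y')) := fun y' =>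
    ((hasDerivAt_gfgmCopula_left ha hb ρ (F x) (G y')).comp x hF).deriv.trans (mul_comm _ _)
  simp only [hinner]
  refine HasDerivAt.deriv ((hG.add
    (((hasDerivAt_gfgmPerturbation ha hb (G y)).comp y hG).const_mul
      (ρ * gfgmPerturbationDeriv a b (F x)))).const_mul F' |>.congr_deriv ?_)
  ring

lemma gfgmPerturbationDeriv_eq {a b u : ℝ} (hu : u ≠ 0) (hu₁ : 1 - u ≠ 0) :
    gfgmPerturbationDeriv a b u = u ^ (b - 1) * (1 - u) ^ (a - 1) * ((a + b) * (1 - u) - a) := by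
  have hub : u ^ b = u ^ (b - 1) * u := by rw [← rpow_add_one hu]; norm_num
  have hua : (1 - u) ^ a = (1 - u) ^ (a - 1) * (1 - u) := by rw [← rpow_add_one hu₁]; norm_num
  rw [gfgmPerturbationDeriv, hub, hua]
  ring

lemma gfgmPerturbationDeriv_weibullCDF (a b : ℝ) {α β x : ℝ} (hβ : 0 < β) (hx : 0 < x) :
    gfgmPerturbationDeriv a b (weibullCDF α β x) =
      weibullCDF α β x ^ (b - 1) * exp (-((a - 1) * (x / β) ^ α)) *
        ((a + b) * exp (-((x / β) ^ α)) - a) := by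
  have hA : 0 < (x / β) ^ α := rpow_pos_of_pos (div_pos hx hβ) α
  have hsurv : 1 - weibullCDF α β x = exp (-((x / β) ^ α)) := by rw [weibullCDF]; ring
  have hCDF : weibullCDF α β x ≠ 0 := by
    rw [weibullCDF, sub_ne_zero, ne_comm, Ne, exp_eq_one_iff]
    exact (neg_neg_of_pos hA).ne
  rw [gfgmPerturbationDeriv_eq hCDF (hsurv ▸ (exp_pos _).ne'), hsurv, ← exp_mul, neg_mul,
    mul_comm _ (a - 1)]

theorem gfgm_weibull_mixed_partial_general (α₁ β₁ α₂ β₂ a b ρ : ℝ)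
    (hα₁ : 0 < α₁) (hβ₁ : 0 < β₁) (hα₂ : 0 < α₂) (hβ₂ : 0 < β₂)
    (ha : 1 ≤ a) (hb : 1 ≤ b) :
    ∀ x > (0:ℝ), ∀ y > (0:ℝ),
      deriv (fun y' => deriv
          (fun x' =>
            (1 - Real.exp (-((x' / β₁) ^ α₁))) * (1 - Real.exp (-((y' / β₂) ^ α₂)))
            + ρ * (1 - Real.exp (-((x' / β₁) ^ α₁))) ^ b
                * (1 - Real.exp (-((y' / β₂) ^ α₂))) ^ b
                * (1 - (1 - Real.exp (-((x' / β₁) ^ α₁)))) ^ a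
                * (1 - (1 - Real.exp (-((y' / β₂) ^ α₂)))) ^ a) x) y
        = (α₁ * α₂ / (β₁ * β₂)) * ((x / β₁) ^ α₁) ^ (1 - 1 / α₁) *
            ((y / β₂) ^ α₂) ^ (1 - 1 / α₂) *
            Real.exp (-((x / β₁) ^ α₁ + (y / β₂) ^ α₂)) *
            (1 + ρ * (1 - Real.exp (-((x / β₁) ^ α₁))) ^ (b - 1)
               * (1 - Real.exp (-((y / β₂) ^ α₂))) ^ (b - 1)
               * (Real.exp (-((a - 1) * ((x / β₁) ^ α₁ + (y / β₂) ^ α₂)))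
                  * ((a + b) * Real.exp (-((x / β₁) ^ α₁)) - a)
                  * ((a + b) * Real.exp (-((y / β₂) ^ α₂)) - a))) := by
  intro x hx y hy
  change deriv (fun y' => deriv (fun x' =>
    gfgmCopula a b ρ (weibullCDF α₁ β₁ x') (weibullCDF α₂ β₂ y')) x) y = _
  rw [deriv_deriv_gfgmCopula_comp ha hb ρ (hasDerivAt_weibullCDF hα₁ hβ₁ hx)
      (hasDerivAt_weibullCDF hα₂ hβ₂ hy),
    gfgmPerturbationDeriv_weibullCDF a b hβ₁ hx, gfgmPerturbationDeriv_weibullCDF a b hβ₂ hy,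
    mul_add (a - 1), neg_add, exp_add, neg_add, exp_add]
  simp only [weibullCDF]
  ring

/-- Let `α₁, β₁, α₂, β₂ > 0`, `a ≥ 1`, `b ≥ 1`, `−1 ≤ ρ ≤ 1`, and for
`x, y > 0` set `A = (x/β₁)^{α₁}`, `B = (y/β₂)^{α₂}`, `S = A + B`, and
`D = exp(−(a−1)S)·((a+b)e^{−A} − a)·((a+b)e^{−B} − a)`. Then the GFGM
bivariate Weibull CDF
`F_{XY}(x,y) = F_X(x)F_Y(y) + ρ·F_X(x)^b·F_Y(y)^b·(1−F_X(x))^a·(1−F_Y(y))^a`,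
where `F_X(x) = 1 − e^{−A}` and `F_Y(y) = 1 − e^{−B}`, has second mixed
partial derivative `∂²F_{XY}/∂x∂y` equal to
`(α₁α₂/(β₁β₂))·A^{1−1/α₁}·B^{1−1/α₂}·e^{−S}·[1 + ρ(1−e^{−A})^{b−1}(1−e^{−B})^{b−1}·D]`
at every `(x,y)` with `x > 0`, `y > 0`. -/
theorem gfgm_weibull_mixed_partial (α₁ β₁ α₂ β₂ a b ρ : ℝ)
    (hα₁ : 0 < α₁) (hβ₁ : 0 < β₁) (hα₂ : 0 < α₂) (hβ₂ : 0 < β₂)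
    (ha : 1 ≤ a) (hb : 1 ≤ b) (hρ₁ : -1 ≤ ρ) (hρ₂ : ρ ≤ 1) :
    ∀ x > (0:ℝ), ∀ y > (0:ℝ),
      deriv (fun y' => deriv
          (fun x' =>
            (1 - Real.exp (-((x' / β₁) ^ α₁))) * (1 - Real.exp (-((y' / β₂) ^ α₂)))
            + ρ * (1 - Real.exp (-((x' / β₁) ^ α₁))) ^ b
                * (1 - Real.exp (-((y' / β₂) ^ α₂))) ^ b
                * (1 - (1 - Real.exp (-((x' / β₁) ^ α₁)))) ^ a
                * (1 - (1 - Real.exp (-((y' / β₂) ^ α₂)))) ^ a) x) y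
        = (α₁ * α₂ / (β₁ * β₂)) * ((x / β₁) ^ α₁) ^ (1 - 1 / α₁) *
            ((y / β₂) ^ α₂) ^ (1 - 1 / α₂) *
            Real.exp (-((x / β₁) ^ α₁ + (y / β₂) ^ α₂)) *
            (1 + ρ * (1 - Real.exp (-((x / β₁) ^ α₁))) ^ (b - 1)
               * (1 - Real.exp (-((y / β₂) ^ α₂))) ^ (b - 1)
               * (Real.exp (-((a - 1) * ((x / β₁) ^ α₁ + (y / β₂) ^ α₂)))
                  * ((a + b) * Real.exp (-((x / β₁) ^ α₁)) - a)
                  * ((a + b) * Real.exp (-((y / β₂) ^ α₂)) - a))) :=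
  gfgm_weibull_mixed_partial_general α₁ β₁ α₂ β₂ a b ρ hα₁ hβ₁ hα₂ hβ₂ ha hb
end

section
/- Let X and Y be real-valued random variables on a probability space with continuous marginal CDFs F_X(x) = P(X ≤ x) and F_Y(y) = P(Y ≤ y), and joint CDF H(x,y) = P(X ≤ x and Y ≤ y). Then there exists a unique function C : [0,1]² → [0,1] such that (i) C(u,1) = u and C(1,v) = v for all u, v ∈ [0,1]; (ii) C(u,0) = 0 and C(0,v) = 0 for all u, v ∈ [0,1]; (iii) C(u₂,v₂) − C(u₁,v₂) − C(u₂,v₁) + C(u₁,v₁) ≥ 0 whenever 0 ≤ u₁ ≤ u₂ ≤ 1 and 0 ≤ v₁ ≤ v₂ ≤ 1; and (iv) H(x,y) = C(F_X(x), F_Y(y)) for all x, y ∈ ℝ. -/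
open MeasureTheory

/-- A bivariate copula (as a function `ℝ → ℝ → ℝ`, constrained on `[0,1]²`):
it maps `[0,1]²` into `[0,1]`, satisfies the boundary conditions
`C(u,1) = u`, `C(1,v) = v`, `C(u,0) = 0`, `C(0,v) = 0`, and is 2-increasing. -/
def IsBivariateCopula (C : ℝ → ℝ → ℝ) : Prop :=
  (∀ u ∈ Set.Icc (0:ℝ) 1, ∀ v ∈ Set.Icc (0:ℝ) 1, C u v ∈ Set.Icc (0:ℝ) 1) ∧
  (∀ u ∈ Set.Icc (0:ℝ) 1, C u 1 = u) ∧
  (∀ v ∈ Set.Icc (0:ℝ) 1, C 1 v = v) ∧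
  (∀ u ∈ Set.Icc (0:ℝ) 1, C u 0 = 0) ∧
  (∀ v ∈ Set.Icc (0:ℝ) 1, C 0 v = 0) ∧
  (∀ u₁ u₂ v₁ v₂ : ℝ, 0 ≤ u₁ → u₁ ≤ u₂ → u₂ ≤ 1 → 0 ≤ v₁ → v₁ ≤ v₂ → v₂ ≤ 1 →
    0 ≤ C u₂ v₂ - C u₁ v₂ - C u₂ v₁ + C u₁ v₁)


/-!
Put `U = F_X(X)` and `V = F_Y(Y)`. Since the marginals are continuous, `U` and `V` are uniform
on `[0, 1]` (the probability integral transform), so the joint distribution function `C` of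
`(U, V)` is a copula. The event `X ≤ x` coincides almost surely with `U ≤ F_X(x)`, and likewise
for `Y`, whence `H(x, y) = C(F_X(x), F_Y(y))`. For uniqueness, `F_X` and `F_Y` take every value in
`(0, 1)` by the intermediate value theorem, and on the boundary of `[0, 1]²` a copula is pinned
down by its boundary conditions.
-/

open ProbabilityTheory Set Topology

theorem Monotone.exists_setOf_le_eq_Iic {F : ℝ → ℝ} (hmono : Monotone F) (hcont : Continuous F)
    {u : ℝ} (hne : {t | F t ≤ u}.Nonempty) (hbdd : BddAbove {t | F t ≤ u}) :
    ∃ x, F x = u ∧ {t | F t ≤ u} = Iic x := by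
  set x := sSup {t | F t ≤ u}
  have hx : F x ≤ u := (isClosed_le hcont continuous_const).csSup_mem hne hbdd
  have hset : {t | F t ≤ u} = Iic x :=
    Subset.antisymm (fun t ht => le_csSup hbdd ht) fun t ht => (hmono ht).trans hx
  have hright : ∀ᶠ t in 𝓝[>] x, u ≤ F t :=
    eventually_nhdsWithin_of_forall fun t (ht : x < t) =>
      le_of_not_ge fun htu => ht.not_ge (hset.subset htu)
  have hcontx : ContinuousWithinAt F (Ioi x) x := hcont.continuousWithinAt
  exact ⟨x, hx.antisymm (_root_.ge_of_tendsto hcontx hright), hset⟩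

section Cdf

variable {μ : Measure ℝ}

theorem Ioo_subset_range_cdf (hμ : Continuous (cdf μ)) : Ioo 0 1 ⊆ range (cdf μ) :=
  fun _ hu => mem_range_of_exists_le_of_exists_ge hμ
    (((tendsto_cdf_atBot μ).eventually_lt_const hu.1).exists.imp fun _ => le_of_lt)
    (((tendsto_cdf_atTop μ).eventually_const_lt hu.2).exists.imp fun _ => le_of_lt)

theorem measureReal_setOf_cdf_le [IsProbabilityMeasure μ] (hμ : Continuous (cdf μ)) {u : ℝ}
    (hu : u ∈ Icc (0 : ℝ) 1) : μ.real {t | cdf μ t ≤ u} = u := by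
  obtain rfl | hu1 := hu.2.eq_or_lt
  · simp [cdf_le_one]
  have hbdd : BddAbove {t | cdf μ t ≤ u} := by
    obtain ⟨b, hb⟩ := ((tendsto_cdf_atTop μ).eventually_const_lt hu1).exists_forall_of_atTop
    exact ⟨b, fun t ht => le_of_not_gt fun hbt => (hb t hbt.le).not_ge ht⟩
  rcases eq_empty_or_nonempty {t | cdf μ t ≤ u} with hempty | hne
  · have hu0 : u ≤ 0 := ge_of_tendsto' (tendsto_cdf_atBot μ) fun t =>
      le_of_not_ge fun htu => hempty.subset htu
    rw [hempty, measureReal_empty]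
    exact hu.1.antisymm hu0
  · obtain ⟨x, hx, hset⟩ := (monotone_cdf μ).exists_setOf_le_eq_Iic hμ hne hbdd
    rw [hset, ← cdf_eq_real, hx]

end Cdf

section Measure

variable {Ω : Type*} [MeasurableSpace Ω]

theorem measureReal_inter_add_inter_le (μ : Measure Ω) [IsFiniteMeasure μ] {A₁ A₂ B₁ B₂ : Set Ω}
    (hA : A₁ ⊆ A₂) (hB : B₁ ⊆ B₂) (hA₂ : MeasurableSet A₂) (hB₁ : MeasurableSet B₁) :
    μ.real (A₁ ∩ B₂) + μ.real (A₂ ∩ B₁) ≤ μ.real (A₂ ∩ B₂) + μ.real (A₁ ∩ B₁) := by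
  have hinter : (A₁ ∩ B₂) ∩ (A₂ ∩ B₁) = A₁ ∩ B₁ := by
    ext ω
    exact ⟨fun h => ⟨h.1.1, h.2.2⟩, fun h => ⟨⟨h.1, hB h.2⟩, hA h.1, h.2⟩⟩
  have hunion : (A₁ ∩ B₂) ∪ (A₂ ∩ B₁) ⊆ A₂ ∩ B₂ :=
    union_subset (inter_subset_inter_left _ hA) (inter_subset_inter_right _ hB)
  rw [← measureReal_union_add_inter (hA₂.inter hB₁), hinter]
  linarith [measureReal_mono (μ := μ) hunion]

theorem measureReal_add_measureReal_sub_one_le_inter (μ : Measure Ω) [IsProbabilityMeasure μ]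
    {s t : Set Ω} (ht : MeasurableSet t) : μ.real s + μ.real t - 1 ≤ μ.real (s ∩ t) := by
  have := measureReal_union_add_inter (μ := μ) (s := s) ht
  linarith [measureReal_le_one (μ := μ) (s := s ∪ t)]

theorem isBivariateCopula_of_uniform (P : Measure Ω) [IsProbabilityMeasure P] {U V : Ω → ℝ}
    (hU : Measurable U) (hV : Measurable V)
    (hUunif : ∀ u ∈ Icc (0 : ℝ) 1, P.real {ω | U ω ≤ u} = u)
    (hVunif : ∀ v ∈ Icc (0 : ℝ) 1, P.real {ω | V ω ≤ v} = v) :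
    IsBivariateCopula fun u v => P.real {ω | U ω ≤ u ∧ V ω ≤ v} := by
  have hmU (u : ℝ) : MeasurableSet {ω | U ω ≤ u} := measurableSet_le hU measurable_const
  have hmV (v : ℝ) : MeasurableSet {ω | V ω ≤ v} := measurableSet_le hV measurable_const
  have hleU (u v : ℝ) : P.real {ω | U ω ≤ u ∧ V ω ≤ v} ≤ P.real {ω | U ω ≤ u} :=
    measureReal_mono fun _ h => h.1
  have hleV (u v : ℝ) : P.real {ω | U ω ≤ u ∧ V ω ≤ v} ≤ P.real {ω | V ω ≤ v} :=
    measureReal_mono fun _ h => h.2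
  have hfrechet (u v : ℝ) :
      P.real {ω | U ω ≤ u} + P.real {ω | V ω ≤ v} - 1 ≤ P.real {ω | U ω ≤ u ∧ V ω ≤ v} :=
    measureReal_add_measureReal_sub_one_le_inter P (hmV v)
  have h0 : (0 : ℝ) ∈ Icc (0 : ℝ) 1 := ⟨le_rfl, zero_le_one⟩
  have h1 : (1 : ℝ) ∈ Icc (0 : ℝ) 1 := ⟨zero_le_one, le_rfl⟩
  refine ⟨fun u _ v _ => ⟨measureReal_nonneg, measureReal_le_one⟩, fun u hu => ?_,
    fun v hv => ?_, fun u _ => ?_, fun v _ => ?_, ?_⟩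
  · linarith [hleU u 1, hfrechet u 1, hUunif u hu, hVunif 1 h1]
  · linarith [hleV 1 v, hfrechet 1 v, hUunif 1 h1, hVunif v hv]
  · linarith [hleV u 0, hVunif 0 h0, measureReal_nonneg (μ := P) (s := {ω | U ω ≤ u ∧ V ω ≤ 0})]
  · linarith [hleU 0 v, hUunif 0 h0, measureReal_nonneg (μ := P) (s := {ω | U ω ≤ 0 ∧ V ω ≤ v})]
  · intro u₁ u₂ v₁ v₂ _ hu _ _ hv _
    have := measureReal_inter_add_inter_le P (A₁ := {ω | U ω ≤ u₁}) (A₂ := {ω | U ω ≤ u₂})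
      (B₁ := {ω | V ω ≤ v₁}) (B₂ := {ω | V ω ≤ v₂}) (fun _ h => h.trans hu)
      (fun _ h => h.trans hv) (hmU u₂) (hmV v₁)
    simp only [← ofPred_and] at this
    dsimp only
    linarith

end Measure

section RandomVariable

variable {Ω : Type*} [MeasurableSpace Ω] {P : Measure Ω} [IsProbabilityMeasure P] {X : Ω → ℝ}

theorem cdf_map_eq_measureReal (hX : Measurable X) (x : ℝ) :
    cdf (P.map X) x = P.real {ω | X ω ≤ x} := by
  have := Measure.isProbabilityMeasure_map (μ := P) hX.aemeasurable
  rw [cdf_eq_real, map_measureReal_apply hX measurableSet_Iic]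
  rfl

theorem measureReal_setOf_cdf_map_le (hX : Measurable X) (hcont : Continuous (cdf (P.map X)))
    {u : ℝ} (hu : u ∈ Icc (0 : ℝ) 1) : P.real {ω | cdf (P.map X) (X ω) ≤ u} = u := by
  have := Measure.isProbabilityMeasure_map (μ := P) hX.aemeasurable
  exact (map_measureReal_apply hX (measurableSet_le (monotone_cdf _).measurable
    measurable_const)).symm.trans (measureReal_setOf_cdf_le hcont hu)

/-- The first event is contained in the second and both have probability `cdf (P.map X) x`. -/
theorem setOf_le_ae_eq_setOf_cdf_map_le (hX : Measurable X) (hcont : Continuous (cdf (P.map X)))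
    (x : ℝ) : {ω | X ω ≤ x} =ᵐ[P] {ω | cdf (P.map X) (X ω) ≤ cdf (P.map X) x} := by
  refine ae_eq_of_subset_of_measure_ge (fun ω hω => monotone_cdf _ hω) (le_of_eq ?_)
    (measurableSet_le hX measurable_const).nullMeasurableSet (measure_ne_top _ _)
  rw [← ofReal_measureReal, ← ofReal_measureReal,
    measureReal_setOf_cdf_map_le hX hcont ⟨cdf_nonneg _ _, cdf_le_one _ _⟩,
    cdf_map_eq_measureReal hX]

end RandomVariable

theorem IsBivariateCopula.eqOn_of_comp_eq {C C' : ℝ → ℝ → ℝ} (hC : IsBivariateCopula C)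
    (hC' : IsBivariateCopula C') {F G : ℝ → ℝ} (hF : Ioo 0 1 ⊆ range F)
    (hG : Ioo 0 1 ⊆ range G) (h : ∀ x y, C (F x) (G y) = C' (F x) (G y)) :
    ∀ u ∈ Icc (0 : ℝ) 1, ∀ v ∈ Icc (0 : ℝ) 1, C u v = C' u v := by
  obtain ⟨-, hu1, h1v, hu0, h0v, -⟩ := hC
  obtain ⟨-, hu1', h1v', hu0', h0v', -⟩ := hC'
  intro u hu v hv
  obtain rfl | hu₀ := hu.1.eq_or_lt
  · rw [h0v v hv, h0v' v hv]
  obtain rfl | hv₀ := hv.1.eq_or_lt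
  · rw [hu0 u hu, hu0' u hu]
  obtain rfl | hu₁ := hu.2.eq_or_lt
  · rw [h1v v hv, h1v' v hv]
  obtain rfl | hv₁ := hv.2.eq_or_lt
  · rw [hu1 u hu, hu1' u hu]
  obtain ⟨x, rfl⟩ := hF ⟨hu₀, hu₁⟩
  obtain ⟨y, rfl⟩ := hG ⟨hv₀, hv₁⟩
  exact h x y

/-- Sklar's theorem (bivariate, continuous marginals): for random variables
`X, Y` with continuous marginal CDFs `F_X`, `F_Y` and joint CDF `H`, there is
a copula `C`, unique on `[0,1]²`, with `H(x,y) = C(F_X(x), F_Y(y))`. -/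
theorem sklar_bivariate_continuous {Ω : Type*} [MeasurableSpace Ω]
    (P : Measure Ω) [IsProbabilityMeasure P]
    (X Y : Ω → ℝ) (hX : Measurable X) (hY : Measurable Y)
    (hFX : Continuous fun x : ℝ => (P {ω | X ω ≤ x}).toReal)
    (hFY : Continuous fun y : ℝ => (P {ω | Y ω ≤ y}).toReal) :
    ∃ C : ℝ → ℝ → ℝ,
      (IsBivariateCopula C ∧
        ∀ x y : ℝ, (P {ω | X ω ≤ x ∧ Y ω ≤ y}).toReal
          = C ((P {ω | X ω ≤ x}).toReal) ((P {ω | Y ω ≤ y}).toReal)) ∧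
      (∀ C' : ℝ → ℝ → ℝ,
        (IsBivariateCopula C' ∧
          ∀ x y : ℝ, (P {ω | X ω ≤ x ∧ Y ω ≤ y}).toReal
            = C' ((P {ω | X ω ≤ x}).toReal) ((P {ω | Y ω ≤ y}).toReal)) →
        ∀ u ∈ Set.Icc (0:ℝ) 1, ∀ v ∈ Set.Icc (0:ℝ) 1, C' u v = C u v) := by
  simp only [← measureReal_def, ← cdf_map_eq_measureReal hX, ← cdf_map_eq_measureReal hY]
    at hFX hFY ⊢
  set F := cdf (P.map X)
  set G := cdf (P.map Y)
  set C : ℝ → ℝ → ℝ := fun u v => P.real {ω | F (X ω) ≤ u ∧ G (Y ω) ≤ v}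
  have hC : IsBivariateCopula C :=
    isBivariateCopula_of_uniform P ((monotone_cdf _).measurable.comp hX)
      ((monotone_cdf _).measurable.comp hY) (fun _ => measureReal_setOf_cdf_map_le hX hFX)
      (fun _ => measureReal_setOf_cdf_map_le hY hFY)
  have hsklar (x y : ℝ) : P.real {ω | X ω ≤ x ∧ Y ω ≤ y} = C (F x) (G y) :=
    measureReal_congr ((setOf_le_ae_eq_setOf_cdf_map_le hX hFX x).inter
      (setOf_le_ae_eq_setOf_cdf_map_le hY hFY y))
  refine ⟨C, ⟨hC, hsklar⟩, fun C' ⟨hC', hsklar'⟩ => ?_⟩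
  exact hC'.eqOn_of_comp_eq hC (Ioo_subset_range_cdf hFX) (Ioo_subset_range_cdf hFY)
    fun x y => (hsklar' x y).symm.trans (hsklar x y)
end
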